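/- Let A be a real symmetric n×n matrix whose graph G(A) is acyclic (contains no cycle). Define the matrix N(A) by N(A)_ij = a_ij if i = j or a_ij < 0, and N(A)_ij = 0 otherwise. Then the following are equivalent: (a) A is copositive; (b) A is SPN; (c) N(A) is positive semidefinite. -/

import Mathlib

/-!
Split `A` as `N(A) + (A - N(A))`, where `N(A) = A.diagNegPart`: the second summand is entrywise
nonnegative, so `N(A) ⪰ 0` makes `A` SPN, and SPN matrices are always copositive. For the
converse, let `G⁻ = A.negEntryGraph` be the graph of the negative entries. Since `G(A)` is a
forest, a positive entry never joins two vertices of the same component of `G⁻` (together with a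
path of `G⁻` it would close a cycle), so `N(A)` is the block-diagonal part of `A` along these
components. Restricting a nonnegative vector to each block shows that `N(A)` inherits
copositivity, and a copositive matrix with nonpositive off-diagonal entries is positive
semidefinite: `xᵀMx ≥ |x|ᵀM|x| ≥ 0`.
-/

open Matrix

/-- A real symmetric matrix `A` is *copositive* if `xᵀAx ≥ 0` for every
entrywise nonnegative vector `x`. -/
def Copositive {ι : Type*} [Fintype ι] (A : Matrix ι ι ℝ) : Prop :=
  ∀ x : ι → ℝ, (∀ i, 0 ≤ x i) → 0 ≤ x ⬝ᵥ A.mulVec x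

/-- A real symmetric matrix is *SPN* if it is the sum of a positive semidefinite
matrix and a symmetric entrywise nonnegative matrix. -/
def IsSPN {ι : Type*} [Fintype ι] (A : Matrix ι ι ℝ) : Prop :=
  ∃ P N : Matrix ι ι ℝ, P.PosSemidef ∧ N.IsSymm ∧ (∀ i j, 0 ≤ N i j) ∧ A = P + N

/-- The graph `G(A)` of a symmetric real matrix: `i ≠ j` are adjacent iff `A i j ≠ 0`. -/
def matrixGraph {ι : Type*} (A : Matrix ι ι ℝ) : SimpleGraph ι where
  Adj i j := i ≠ j ∧ (A i j ≠ 0 ∨ A j i ≠ 0)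
  symm := by
    constructor
    intro i j h
    exact ⟨h.1.symm, h.2.symm⟩
  loopless := by
    constructor
    intro i h
    exact h.1 rfl

/-- A graph `G` is an *SPN graph* if every copositive symmetric real matrix whose graph
is isomorphic to `G` is SPN. -/
def IsSPNGraph {V : Type*} [Fintype V] (G : SimpleGraph V) : Prop :=
  ∀ (n : ℕ) (A : Matrix (Fin n) (Fin n) ℝ), A.IsSymm → Copositive A →
    Nonempty (matrixGraph A ≃g G) → IsSPN A

theorem SimpleGraph.IsAcyclic.adj_of_le_of_reachable {V : Type*} {G H : SimpleGraph V}
    (hG : G.IsAcyclic) (hHG : H ≤ G) {u v : V} (huv : G.Adj u v) (hr : H.Reachable u v) :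
    H.Adj u v := by
  by_contra hH
  have hle : H ≤ G.deleteEdges {s(u, v)} := fun a b hab => by
    refine (deleteEdges_adj ..).mpr ⟨hHG hab, fun he => hH ?_⟩
    rw [← mem_edgeSet, ← Set.mem_singleton_iff.mp he]
    exact hab
  exact isBridge_iff.mp (isAcyclic_iff_forall_adj_isBridge.mp hG huv) (hr.mono hle)

namespace Matrix

variable {ι κ : Type*}

def restrictBlocks [DecidableEq κ] (A : Matrix ι ι ℝ) (f : ι → κ) : Matrix ι ι ℝ :=
  of fun i j => if f i = f j then A i j else 0

noncomputable def diagNegPart [DecidableEq ι] (A : Matrix ι ι ℝ) : Matrix ι ι ℝ :=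
  of fun i j => if i = j ∨ A i j < 0 then A i j else 0

def negEntryGraph (A : Matrix ι ι ℝ) : SimpleGraph ι :=
  SimpleGraph.fromRel fun i j => A i j < 0

lemma negEntryGraph_le_matrixGraph (A : Matrix ι ι ℝ) : negEntryGraph A ≤ matrixGraph A :=
  fun _ _ ⟨hij, hneg⟩ => ⟨hij, hneg.imp ne_of_lt ne_of_lt⟩

lemma IsSymm.negEntryGraph_adj {A : Matrix ι ι ℝ} (hA : A.IsSymm) {i j : ι} :
    (negEntryGraph A).Adj i j ↔ i ≠ j ∧ A i j < 0 := by
  simp only [negEntryGraph, SimpleGraph.fromRel_adj, hA.apply j i, or_self]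

lemma IsSymm.diagNegPart [DecidableEq ι] {A : Matrix ι ι ℝ} (hA : A.IsSymm) :
    A.diagNegPart.IsSymm := by
  ext i j
  simp only [Matrix.diagNegPart, transpose_apply, of_apply, hA.apply i j, eq_comm]

open Classical in
theorem diagNegPart_eq_restrictBlocks [DecidableEq ι] {A : Matrix ι ι ℝ} (hA : A.IsSymm)
    (hacyclic : (matrixGraph A).IsAcyclic) :
    A.diagNegPart = A.restrictBlocks (negEntryGraph A).connectedComponentMk := by
  ext i j
  simp only [Matrix.diagNegPart, restrictBlocks, of_apply, SimpleGraph.ConnectedComponent.eq]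
  by_cases hij : i = j
  · simp [hij]
  rcases lt_trichotomy (A i j) 0 with hneg | hzero | hpos
  · have hadj : (negEntryGraph A).Adj i j := hA.negEntryGraph_adj.mpr ⟨hij, hneg⟩
    simp [hneg, hadj.reachable]
  · simp [hzero]
  · have hunreach : ¬ (negEntryGraph A).Reachable i j := fun hr =>
      (hA.negEntryGraph_adj.mp (hacyclic.adj_of_le_of_reachable
        (negEntryGraph_le_matrixGraph A) ⟨hij, .inl hpos.ne'⟩ hr)).2.not_gt hpos
    simp [hij, hpos.not_gt, hunreach]

lemma diagNegPart_apply_nonpos_of_ne [DecidableEq ι] (A : Matrix ι ι ℝ) {i j : ι}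
    (hij : i ≠ j) : A.diagNegPart i j ≤ 0 := by
  simp only [diagNegPart, of_apply, hij, false_or]
  split_ifs with h
  exacts [h.le, le_rfl]

end Matrix

section Copositive

variable {ι κ : Type*} [Fintype ι] {A : Matrix ι ι ℝ}

lemma IsSPN.copositive (h : IsSPN A) : Copositive A := by
  obtain ⟨P, N, hP, -, hN, rfl⟩ := h
  intro x hx
  have hPx : 0 ≤ x ⬝ᵥ P *ᵥ x := by simpa using hP.dotProduct_mulVec_nonneg x
  have hNx : 0 ≤ x ⬝ᵥ N *ᵥ x :=
    dotProduct_nonneg_of_nonneg hx fun i => dotProduct_nonneg_of_nonneg (hN i) hx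
  rw [add_mulVec, dotProduct_add]
  exact add_nonneg hPx hNx

lemma isSPN_of_posSemidef_diagNegPart [DecidableEq ι] (hA : A.IsSymm)
    (h : A.diagNegPart.PosSemidef) : IsSPN A := by
  refine ⟨A.diagNegPart, A - A.diagNegPart, h, hA.sub hA.diagNegPart, fun i j => ?_, by abel⟩
  simp only [Matrix.sub_apply, diagNegPart, of_apply]
  split_ifs with hc
  · simp
  · simpa using (not_lt.mp (not_or.mp hc).2)

lemma Copositive.restrictBlocks [Fintype κ] [DecidableEq κ] (h : Copositive A) (f : ι → κ) :
    Copositive (A.restrictBlocks f) := by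
  intro x hx
  let y : κ → ι → ℝ := fun k i => if f i = k then x i else 0
  have hsum : x ⬝ᵥ A.restrictBlocks f *ᵥ x = ∑ k, y k ⬝ᵥ A *ᵥ y k := by
    simp only [y, Matrix.restrictBlocks, dotProduct, mulVec, of_apply, Finset.mul_sum]
    symm
    rw [Finset.sum_comm]
    refine Finset.sum_congr rfl fun i _ => ?_
    rw [Finset.sum_comm]
    refine Finset.sum_congr rfl fun j _ => ?_
    by_cases hij : f i = f j <;> simp [hij, ite_mul, mul_ite]
  rw [hsum]
  exact Finset.sum_nonneg fun k _ => h (y k) fun i => by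
    simp only [y]; split_ifs <;> simp [hx i]

lemma Copositive.posSemidef_of_offDiag_nonpos (hA : A.IsSymm) (h : Copositive A)
    (hoff : ∀ i j, i ≠ j → A i j ≤ 0) : A.PosSemidef := by
  refine .of_dotProduct_mulVec_nonneg (isHermitian_iff_isSymm.mpr hA) fun x => ?_
  rw [star_trivial]
  refine (h (fun i => |x i|) fun i => abs_nonneg _).trans ?_
  simp only [dotProduct, mulVec, Finset.mul_sum]
  refine Finset.sum_le_sum fun i _ => Finset.sum_le_sum fun j _ => ?_
  by_cases hij : i = j
  · subst hij
    exact le_of_eq (by rw [mul_left_comm, abs_mul_abs_self]; ring)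
  · calc |x i| * (A i j * |x j|) = A i j * |x i * x j| := by rw [abs_mul]; ring
      _ ≤ A i j * (x i * x j) := mul_le_mul_of_nonpos_left (le_abs_self _) (hoff i j hij)
      _ = x i * (A i j * x j) := by ring

lemma Copositive.posSemidef_diagNegPart [DecidableEq ι] (hA : A.IsSymm)
    (hacyclic : (matrixGraph A).IsAcyclic) (h : Copositive A) : A.diagNegPart.PosSemidef := by
  classical
  have hcop : Copositive A.diagNegPart := by
    rw [diagNegPart_eq_restrictBlocks hA hacyclic]
    exact h.restrictBlocks _
  exact hcop.posSemidef_of_offDiag_nonpos hA.diagNegPart fun i j =>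
    diagNegPart_apply_nonpos_of_ne A

end Copositive

/-- For a symmetric real matrix `A` whose graph is acyclic, the following
are equivalent: (a) `A` is copositive; (b) `A` is SPN; (c) the matrix `N(A)` keeping
the diagonal and the negative entries of `A` (other entries replaced by `0`) is
positive semidefinite. -/
theorem acyclic_copositive_iff_isSPN_iff_negPart_posSemidef
    (n : ℕ) (A : Matrix (Fin n) (Fin n) ℝ) (hA : A.IsSymm)
    (hacyclic : (matrixGraph A).IsAcyclic) :
    (Copositive A ↔ IsSPN A) ∧
    (IsSPN A ↔
      (Matrix.of fun i j => if i = j ∨ A i j < 0 then A i j else 0).PosSemidef) := by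
  have hpsd : Copositive A → A.diagNegPart.PosSemidef :=
    Copositive.posSemidef_diagNegPart hA hacyclic
  exact ⟨⟨fun h => isSPN_of_posSemidef_diagNegPart hA (hpsd h), IsSPN.copositive⟩,
    ⟨fun h => hpsd h.copositive, isSPN_of_posSemidef_diagNegPart hA⟩⟩
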